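/- arXiv:math/0006226 — 4 statements merged into one kernel-verified Lean document; each statement's English description precedes it below -/
import Mathlib

section
/- In the quantum Clifford algebra Cl(Γ,σ,g) for the 4D± calculus on SL_q(2), generated by θ₁₁, θ₁₂, θ₂₁, θ₂₂ with the relations θ₁₁² = 0, θ₁₂θ₁₁ + q²θ₁₁θ₁₂ + (q−q^{−1})θ₁₁θ₂₁ = 0, θ₂₁θ₁₁ + θ₁₁θ₂₁ = 0, θ₂₂θ₁₁ + θ₁₁θ₂₂ = −(q²+1)c₁, θ₁₂² + (q−q^{−1})θ₁₁θ₂₂ = 0, θ₂₁θ₁₂ + θ₁₂θ₂₁ + q^{−1}(q−q^{−1})θ₁₁θ₂₂ = (1+q^{−2})c₁, θ₂₂θ₁₂ + q²θ₁₂θ₂₂ + (q−q^{−1})θ₂₁θ₂₂ = 0, θ₂₁² = 0, θ₂₂θ₂₁ + θ₂₁θ₂₂ = 0, θ₂₂² = 0, the element θ := q^{1/2}(q−q^{−1})^{−1} Σ_{ij} Č^{ij} θ_{ij} = (q−q^{−1})^{−1}(θ₁₂ − q θ₂₁) satisfies θ² = −(q+q^{−1}) c₁ (q−q^{−1})^{−2}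 · 1. -/
/-- in the quantum Clifford algebra of the `4D_±` calculus on `SL_q(2)` (generators
`θ_{ij}` with the ten listed relations), the biinvariant element
`θ = (q−q^{−1})^{−1}(θ₁₂ − q θ₂₁)` satisfies `θ² = −(q+q^{−1}) c₁ (q−q^{−1})^{−2} · 1`. -/
theorem stmt8 {A : Type*} [Ring A] [Algebra ℂ A] (q : ℂ) (hq0 : q ≠ 0) (hq1 : q ^ 2 ≠ 1)
    (c1 : ℝ) (hc1 : c1 ≠ 0) (t11 t12 t21 t22 : A)
    (h1 : t11 * t11 = 0)
    (h2 : t12 * t11 + q ^ 2 • (t11 * t12) + (q - q⁻¹) • (t11 * t21) = 0)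
    (h3 : t21 * t11 + t11 * t21 = 0)
    (h4 : t22 * t11 + t11 * t22 = (-((q ^ 2 + 1) * (c1 : ℂ))) • (1 : A))
    (h5 : t12 * t12 + (q - q⁻¹) • (t11 * t22) = 0)
    (h6 : t21 * t12 + t12 * t21 + (q⁻¹ * (q - q⁻¹)) • (t11 * t22)
      = ((1 + q⁻¹ ^ 2) * (c1 : ℂ)) • (1 : A))
    (h7 : t22 * t12 + q ^ 2 • (t12 * t22) + (q - q⁻¹) • (t21 * t22) = 0)
    (h8 : t21 * t21 = 0)
    (h9 : t22 * t21 + t21 * t22 = 0)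
    (h10 : t22 * t22 = 0) :
    ((q - q⁻¹)⁻¹ • (t12 - q • t21)) * ((q - q⁻¹)⁻¹ • (t12 - q • t21)) =
      (-((q + q⁻¹) * (c1 : ℂ)) * ((q - q⁻¹) ^ 2)⁻¹) • (1 : A) := by
  have e5 : t12 * t12 = -((q - q⁻¹) • (t11 * t22)) := eq_neg_of_add_eq_zero_left h5
  have e6 : t21 * t12 + t12 * t21
      = ((1 + q⁻¹ ^ 2) * (c1 : ℂ)) • (1 : A) - (q⁻¹ * (q - q⁻¹)) • (t11 * t22) :=
    eq_sub_of_add_eq h6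
  have expand : (t12 - q • t21) * (t12 - q • t21)
      = t12 * t12 - q • (t21 * t12 + t12 * t21) + (q * q) • (t21 * t21) := by
    simp only [mul_sub, sub_mul, smul_mul_assoc, mul_smul_comm, smul_add, smul_smul]
    module
  have key : (t12 - q • t21) * (t12 - q • t21) = (-((q + q⁻¹) * (c1 : ℂ))) • (1 : A) := by
    rw [expand, e5, e6, h8, smul_zero, smul_sub, smul_smul, smul_smul]
    have hqq : q * q⁻¹ = 1 := mul_inv_cancel₀ hq0
    have hc : q * ((1 + q⁻¹ ^ 2) * (c1 : ℂ)) = (q + q⁻¹) * (c1 : ℂ) := by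
      field_simp
    have hx : q * (q⁻¹ * (q - q⁻¹)) = q - q⁻¹ := by
      rw [show q * (q⁻¹ * (q - q⁻¹)) = q * q⁻¹ * (q - q⁻¹) by ring, hqq, one_mul]
    rw [hc, hx]
    module
  rw [smul_mul_smul_comm, key, smul_smul]
  congr 1
  rw [sq, mul_inv]
  ring
end

section
/- In the abstract algebra with generators θ₁₁,θ₁₂,θ₂₁,θ₂₂ and the ten quantum Clifford relations of the 4D± calculus (as in the previous context), any two-sided ideal J that contains a nonzero scalar multiple of θ₁₁θ₂₁ must contain 1, hence J is the whole algebra. -/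
/-- in the algebra with generators `θ_{ij}` and the ten quantum Clifford relations of
the `4D_±` calculus, any two-sided ideal containing a nonzero scalar multiple of `θ₁₁θ₂₁` contains
`1`, hence is the whole algebra. -/
theorem stmt9 {A : Type*} [Ring A] [Algebra ℂ A] (q : ℂ) (hq0 : q ≠ 0)
    (hq1 : q ^ 2 ≠ 1) (hq2 : q ^ 2 ≠ -1)
    (c1 : ℝ) (hc1 : c1 ≠ 0) (t11 t12 t21 t22 : A)
    (h1 : t11 * t11 = 0)
    (h2 : t12 * t11 + q ^ 2 • (t11 * t12) + (q - q⁻¹) • (t11 * t21) = 0)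
    (h3 : t21 * t11 + t11 * t21 = 0)
    (h4 : t22 * t11 + t11 * t22 = (-((q ^ 2 + 1) * (c1 : ℂ))) • (1 : A))
    (h5 : t12 * t12 + (q - q⁻¹) • (t11 * t22) = 0)
    (h6 : t21 * t12 + t12 * t21 + (q⁻¹ * (q - q⁻¹)) • (t11 * t22)
      = ((1 + q⁻¹ ^ 2) * (c1 : ℂ)) • (1 : A))
    (h7 : t22 * t12 + q ^ 2 • (t12 * t22) + (q - q⁻¹) • (t21 * t22) = 0)
    (h8 : t21 * t21 = 0)
    (h9 : t22 * t21 + t21 * t22 = 0)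
    (h10 : t22 * t22 = 0)
    (J : TwoSidedIdeal A) (lam : ℂ) (hlam : lam ≠ 0) (hmem : lam • (t11 * t21) ∈ J) :
    (1 : A) ∈ J ∧ J = ⊤ := by
  have smulJ : ∀ (c : ℂ) (x : A), x ∈ J → c • x ∈ J := fun c x hx => by
    rw [Algebra.smul_def]; exact J.mul_mem_left _ _ hx
  -- θ₁₁θ₂₁ ∈ J
  have hx : t11 * t21 ∈ J := by
    have := smulJ lam⁻¹ _ hmem
    rwa [smul_smul, inv_mul_cancel₀ hlam, one_smul] at this
  set c : ℂ := -((q ^ 2 + 1) * (c1 : ℂ)) with hc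
  have hcne : c ≠ 0 := by
    simp only [hc, neg_ne_zero, mul_ne_zero_iff]
    refine ⟨fun h => hq2 ?_, by exact_mod_cast hc1⟩
    linear_combination h
  have h4' : t22 * t11 = c • (1 : A) - t11 * t22 := eq_sub_of_add_eq h4
  have h9' : t22 * t21 = -(t21 * t22) := eq_neg_of_add_eq_zero_left h9
  -- θ₂₁ ∈ J
  have e1 : t22 * (t11 * t21) - (t11 * t21) * t22 = c • t21 := by
    rw [← mul_assoc, h4', sub_mul, smul_mul_assoc, one_mul, mul_assoc, h9', mul_neg,
      sub_neg_eq_add, mul_assoc]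
    abel
  have ht21 : t21 ∈ J := by
    have hm : c • t21 ∈ J := by
      rw [← e1]
      exact J.sub_mem (J.mul_mem_left _ _ hx) (J.mul_mem_right _ _ hx)
    have := smulJ c⁻¹ _ hm
    rwa [smul_smul, inv_mul_cancel₀ hcne, one_smul] at this
  -- θ₁₁ ∈ J
  set s : ℂ := (1 + q⁻¹ ^ 2) * (c1 : ℂ) with hs
  have hsne : s ≠ 0 := by
    simp only [hs, mul_ne_zero_iff]
    refine ⟨fun h => hq2 ?_, by exact_mod_cast hc1⟩
    have hq2' : q⁻¹ ^ 2 = -1 := by linear_combination h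
    rw [inv_pow, inv_eq_iff_eq_inv] at hq2'
    rw [hq2']
    norm_num
  have e2 : s • t11 = t11 * (t21 * t12) + t11 * (t12 * t21) := by
    have := congrArg (fun y => t11 * y) h6
    simp only [mul_add, mul_smul_comm, ← mul_assoc, h1, zero_mul, smul_zero, add_zero,
      mul_one] at this
    rw [← this, mul_assoc, mul_assoc]
  have ht11 : t11 ∈ J := by
    have hm : s • t11 ∈ J := by
      rw [e2]
      exact J.add_mem (J.mul_mem_left _ _ (J.mul_mem_right _ _ ht21))
        (J.mul_mem_left _ _ (J.mul_mem_left _ _ ht21))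
    have := smulJ s⁻¹ _ hm
    rwa [smul_smul, inv_mul_cancel₀ hsne, one_smul] at this
  -- 1 ∈ J
  have hone : (1 : A) ∈ J := by
    have hm : c • (1 : A) ∈ J := by
      rw [← h4]
      exact J.add_mem (J.mul_mem_left _ _ ht11) (J.mul_mem_right _ _ ht11)
    have := smulJ c⁻¹ _ hm
    rwa [smul_smul, inv_mul_cancel₀ hcne, one_smul] at this
  exact ⟨hone, J.one_mem_iff.mp hone⟩
end

section
/- Let p̃₀(s,t) and p̃₁(s,t) be two commuting indeterminates subject to p̃₁² + q^{−1/2}p̃₁ + q^{−1}p̃₁p̃₀ + q^{−1/2}(q−q^{−1})^{−1}p̃₀ = 0. Define ∂₀ := −(q+q^{−1})^{−1}p̃₀ + q^{1/2}(q−q^{−1})^{−1} and ∂₁ := p̃₁ + (q+q^{−1})^{−1}p̃₀. Then ∂₁² + q^{−1}(q−q^{−1})∂₀∂₁ − q^{−2}∂₀² = −q^{−1}(q−q^{−1})^{−2}. -/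
set_option maxHeartbeats 1000000 in
/-- if commuting elements `p̃₀, p̃₁` satisfy
`p̃₁² + q^{−1/2}p̃₁ + q^{−1}p̃₁p̃₀ + q^{−1/2}(q−q^{−1})^{−1}p̃₀ = 0` (with `r = q^{1/2}`), then
`∂₀ := −(q+q^{−1})^{−1}p̃₀ + q^{1/2}(q−q^{−1})^{−1}` and `∂₁ := p̃₁ + (q+q^{−1})^{−1}p̃₀`
satisfy `∂₁² + q^{−1}(q−q^{−1})∂₀∂₁ − q^{−2}∂₀² = −q^{−1}(q−q^{−1})^{−2}`. -/
theorem stmt14 {A : Type*} [CommRing A] [Algebra ℂ A] (r : ℂ) (hr : r ≠ 0)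
    (hq1 : (r ^ 2) ^ 2 ≠ 1) (hq2 : (r ^ 2) ^ 2 ≠ -1)
    (p0 p1 : A)
    (hrel : p1 ^ 2 + r⁻¹ • p1 + ((r ^ 2)⁻¹) • (p1 * p0)
        + (r⁻¹ * (r ^ 2 - (r ^ 2)⁻¹)⁻¹) • p0 = 0)
    (d0 d1 : A)
    (hd0 : d0 = (-((r ^ 2 + (r ^ 2)⁻¹)⁻¹)) • p0 + (r * (r ^ 2 - (r ^ 2)⁻¹)⁻¹) • (1 : A))
    (hd1 : d1 = p1 + ((r ^ 2 + (r ^ 2)⁻¹)⁻¹) • p0) :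
    d1 ^ 2 + ((r ^ 2)⁻¹ * (r ^ 2 - (r ^ 2)⁻¹)) • (d0 * d1) - ((r ^ 2)⁻¹) ^ 2 • d0 ^ 2
      = (-(r ^ 2)⁻¹ * ((r ^ 2 - (r ^ 2)⁻¹) ^ 2)⁻¹) • (1 : A) := by
  have hq0 : (r : ℂ) ^ 2 ≠ 0 := pow_ne_zero 2 hr
  have h4 : r ^ 4 - 1 ≠ 0 := by intro h; apply hq1; linear_combination h
  have h4' : r ^ 4 + 1 ≠ 0 := by intro h; apply hq2; linear_combination h
  have e4 : r ^ 2 - (r ^ 2)⁻¹ = (r ^ 4 - 1) / r ^ 2 := by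
    field_simp
  have e5 : r ^ 2 + (r ^ 2)⁻¹ = (r ^ 4 + 1) / r ^ 2 := by
    field_simp
  have e1 : (r ^ 2 - (r ^ 2)⁻¹)⁻¹ = r ^ 2 / (r ^ 4 - 1) := by rw [e4, inv_div]
  have e2 : (r ^ 2 + (r ^ 2)⁻¹)⁻¹ = r ^ 2 / (r ^ 4 + 1) := by rw [e5, inv_div]
  have e3 : ((r ^ 2 - (r ^ 2)⁻¹) ^ 2)⁻¹ = r ^ 4 / (r ^ 4 - 1) ^ 2 := by
    rw [← inv_pow, e1, div_pow]
    ring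
  rw [e1] at hrel
  rw [e2] at hd0 hd1
  rw [e1] at hd0
  rw [e3, e4]
  rw [hd0, hd1]
  have hp1sq : p1 ^ 2 = (-r⁻¹) • p1 + (-(r ^ 2)⁻¹) • (p1 * p0)
      + (-(r⁻¹ * (r ^ 2 / (r ^ 4 - 1)))) • p0 := by
    linear_combination (norm := module) hrel
  have key : (p1 + (r ^ 2 / (r ^ 4 + 1)) • p0) ^ 2
      + ((r ^ 2)⁻¹ * ((r ^ 4 - 1) / r ^ 2)) • (((-(r ^ 2 / (r ^ 4 + 1))) • p0 + (r * (r ^ 2 / (r ^ 4 - 1))) • (1 : A)) * (p1 + (r ^ 2 / (r ^ 4 + 1)) • p0))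
      - ((r ^ 2)⁻¹) ^ 2 • ((-(r ^ 2 / (r ^ 4 + 1))) • p0 + (r * (r ^ 2 / (r ^ 4 - 1))) • (1 : A)) ^ 2
      = p1 ^ 2 + (2 * (r ^ 2 / (r ^ 4 + 1)) - ((r ^ 2)⁻¹ * ((r ^ 4 - 1) / r ^ 2)) * (r ^ 2 / (r ^ 4 + 1))) • (p1 * p0)
        + ((r ^ 2 / (r ^ 4 + 1)) ^ 2 - ((r ^ 2)⁻¹ * ((r ^ 4 - 1) / r ^ 2)) * (r ^ 2 / (r ^ 4 + 1)) ^ 2 - ((r ^ 2)⁻¹) ^ 2 * (r ^ 2 / (r ^ 4 + 1)) ^ 2) • p0 ^ 2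
        + (((r ^ 2)⁻¹ * ((r ^ 4 - 1) / r ^ 2)) * (r * (r ^ 2 / (r ^ 4 - 1)))) • p1 + (((r ^ 2)⁻¹ * ((r ^ 4 - 1) / r ^ 2)) * (r * (r ^ 2 / (r ^ 4 - 1))) * (r ^ 2 / (r ^ 4 + 1)) + 2 * ((r ^ 2)⁻¹) ^ 2 * (r * (r ^ 2 / (r ^ 4 - 1))) * (r ^ 2 / (r ^ 4 + 1))) • p0
        + (-(((r ^ 2)⁻¹) ^ 2 * (r * (r ^ 2 / (r ^ 4 - 1))) ^ 2)) • (1 : A) := by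
    simp only [Algebra.smul_def, map_mul, map_add, map_sub, map_neg, map_pow, map_ofNat, map_div₀, map_inv₀, map_one]
    ring
  rw [show (-(r ^ 2 / (r ^ 4 + 1))) • p0 = (-(r ^ 2 / (r ^ 4 + 1))) • p0 from rfl]
  rw [key, hp1sq]
  have h8 : r ^ 8 - r ^ 16 * 2 + r ^ 24 ≠ 0 := by
    have hx : r ^ 8 - r ^ 16 * 2 + r ^ 24 = r ^ 8 * ((r ^ 4 - 1) * (r ^ 4 + 1)) ^ 2 := by ring
    rw [hx]
    exact mul_ne_zero (pow_ne_zero _ hr) (pow_ne_zero _ (mul_ne_zero h4 h4'))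
  match_scalars
  all_goals field_simp [h8]
  all_goals try ring
  all_goals linear_combination (r ^ 2 : ℂ) * mul_inv_cancel₀ h8
end

section
/- Let q be real, q ∉ {0,1,−1}, γ real, η ∈ {+1,−1}, c₁ ∈ ℝ×. In the commutative polynomial setting with commuting symbols ∂₀, ∂₁ satisfying ∂₁² + q^{−1}(q−q^{−1})∂₀∂₁ − q^{−2}∂₀² = −q^{−1}(q−q^{−1})^{−2}, set x := (q+q^{−1})c₁(q−q^{−1})^{−1}(q^{3−3η/2}(q−1)γ∂₁ + q^{1−3η/2}(q³+1)γ∂₀ − (1+q^{6−3η}γ²)(q−q^{−1})^{−1}) and y := q^{7/2}c₁γ∂₁ + q^{1/2}c₁(q+1)(q³+1)γ(q−q^{−1})^{−1}∂₀ − c₁((q+q^{−1}) + q⁶(q²+q^{−2})γ²)(q−q^{−1})^{−2}. Then (q+1)x − q^{1/2−3η/2}(q+q^{−1})y = η q^{−η−1}(q+q^{−1})c₁ (q³−1)(q−q^{−1})^{−1} (q⁶γ²−1)(q−q^{−1})^{−1}. -/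
set_option maxHeartbeats 1000000 in
/-- quantum Bochner identity, one chiral component: with `q` real, `r = q^{1/2}`,
commuting symbols `∂₀, ∂₁` satisfying the quadratic relation, and `x`, `y` the chiral components
of `D²` and of `∇*∇`, one has
`(q+1)x − q^{1/2−3η/2}(q+q^{−1})y = η q^{−η−1}(q+q^{−1})c₁ (q³−1)(q−q^{−1})^{−1}(q⁶γ²−1)(q−q^{−1})^{−1}`. -/
theorem stmt19 {A : Type*} [CommRing A] [Algebra ℝ A]
    (q r γ c1 : ℝ) (hqpos : 0 < q) (hq1 : q ≠ 1) (hqm1 : q ≠ -1)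
    (hr : r ^ 2 = q) (hc1 : c1 ≠ 0)
    (η : ℤ) (hη : η = 1 ∨ η = -1)
    (d0 d1 : A)
    (hrel : d1 ^ 2 + (q⁻¹ * (q - q⁻¹)) • (d0 * d1) - (q⁻¹) ^ 2 • d0 ^ 2
      = (-q⁻¹ * ((q - q⁻¹) ^ 2)⁻¹) • (1 : A))
    (x y : A)
    (hx : x = ((q + q⁻¹) * c1 * (q - q⁻¹)⁻¹) •
      ((r ^ (6 - 3 * η) * (q - 1) * γ) • d1 + (r ^ (2 - 3 * η) * (q ^ 3 + 1) * γ) • d0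
        - ((1 + q ^ (6 - 3 * η) * γ ^ 2) * (q - q⁻¹)⁻¹) • (1 : A)))
    (hy : y = (r ^ (7 : ℕ) * c1 * γ) • d1
        + (r * c1 * (q + 1) * (q ^ 3 + 1) * γ * (q - q⁻¹)⁻¹) • d0
        - (c1 * ((q + q⁻¹) + q ^ 6 * (q ^ 2 + (q⁻¹) ^ 2) * γ ^ 2) * ((q - q⁻¹) ^ 2)⁻¹) • (1 : A)) :
    (q + 1) • x - (r ^ (1 - 3 * η) * (q + q⁻¹)) • y
      = ((η : ℝ) * q ^ (-η - 1) * (q + q⁻¹) * c1 * ((q ^ 3 - 1) * (q - q⁻¹)⁻¹)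
          * ((q ^ 6 * γ ^ 2 - 1) * (q - q⁻¹)⁻¹)) • (1 : A) := by
  subst hr
  have hr0 : r ≠ 0 := by
    intro h; rw [h] at hqpos; simp at hqpos
  have h1 : r ^ 2 - 1 ≠ 0 := by
    intro h
    rcases mul_self_eq_one_iff.mp (by nlinarith : (r ^ 2) * (r ^ 2) = 1) with h' | h'
    · exact hq1 h'
    · exact hqm1 h'
  have h2 : r ^ 2 + 1 ≠ 0 := by positivity
  have h4 : r ^ 4 - 1 ≠ 0 := fun h => mul_ne_zero h1 h2 (by linear_combination h)
  have k0 : ((r : ℝ) ^ 2)⁻¹ = 1 / r ^ 2 := by rw [one_div]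
  have k : ((r : ℝ) ^ 2 - (r ^ 2)⁻¹) = (r ^ 4 - 1) / r ^ 2 := by
    field_simp
  have k1 : ((r : ℝ) ^ 2 - (r ^ 2)⁻¹)⁻¹ = r ^ 2 / (r ^ 4 - 1) := by
    rw [k, inv_div]
  have k2 : (((r : ℝ) ^ 2 - (r ^ 2)⁻¹) ^ 2)⁻¹ = r ^ 4 / (r ^ 4 - 1) ^ 2 := by
    rw [k, div_pow, inv_div]
    ring
  rcases hη with h | h <;> subst h
  · have e1 : r ^ (6 - 3 * (1:ℤ)) = r ^ (3:ℕ) := by norm_num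
    have e2 : r ^ (2 - 3 * (1:ℤ)) = 1 / r ^ (1:ℕ) := by rw [one_div]; norm_num
    have e3 : r ^ (1 - 3 * (1:ℤ)) = 1 / r ^ (2:ℕ) := by
      rw [show (1 - 3 * (1:ℤ)) = -2 by norm_num, zpow_neg, one_div]
      norm_num
    have e4 : (r ^ 2 : ℝ) ^ (6 - 3 * (1:ℤ)) = (r ^ 2) ^ (3:ℕ) := by
      norm_num
    have e5 : (r ^ 2 : ℝ) ^ (-(1:ℤ) - 1) = 1 / (r ^ 2) ^ (2:ℕ) := by
      rw [show (-(1:ℤ) - 1) = -2 by norm_num, zpow_neg, one_div]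
      norm_num
    rw [hx, hy, e1, e2, e3, e4, e5, k1, k2, k0]
    match_scalars <;> field_simp [hr0, h4] <;> ring
  · have e1 : r ^ (6 - 3 * (-1:ℤ)) = r ^ (9:ℕ) := by norm_num
    have e2 : r ^ (2 - 3 * (-1:ℤ)) = r ^ (5:ℕ) := by norm_num
    have e3 : r ^ (1 - 3 * (-1:ℤ)) = r ^ (4:ℕ) := by norm_num
    have e4 : (r ^ 2 : ℝ) ^ (6 - 3 * (-1:ℤ)) = (r ^ 2) ^ (9:ℕ) := by
      norm_num
    have e5 : (r ^ 2 : ℝ) ^ (-(-1:ℤ) - 1) = 1 := by norm_num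
    rw [hx, hy, e1, e2, e3, e4, e5, k1, k2, k0]
    match_scalars <;> field_simp [hr0, h4] <;> ring
end
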